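/- Let γ = (γ_α)_{α∈[0,∞)ⁿ} be a continuous family of nonnegative numbers and suppose there exist two positive Borel measures μ₁, μ₂ on [0,∞)ⁿ, both supported in E = ⋂ₖ pₖ^{-1}([0,∞)) for real fractional polynomials p₁, …, p_m, with γ_α = ∫ t^α dμᵢ for all α ∈ [0,∞)ⁿ and i = 1, 2. If moreover the induced extended families δᵢ_{(α,β)} = ∫ t^α θ(t)^β dμᵢ (θ(t) = (1+Σtⱼ²+Σpₖ(t)²)^{-1}) coincide, i.e., δ¹ = δ², then μ₁ = μ₂. -/

import Mathlib

open MeasureTheory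
open scoped ComplexOrder

/-- Points of `[0,∞)ⁿ`. -/
abbrev NNVec (n : ℕ) := {t : Fin n → ℝ // ∀ j, 0 ≤ t j}

/-- The real fractional monomial `t ↦ t^α = t₁^{α₁} ⋯ tₙ^{αₙ}` on `[0,∞)ⁿ`
(real powers; the convention `0^0 = 1` is in force). -/
noncomputable def fracMonoR {n : ℕ} (α : Fin n → ℚ) (t : NNVec n) : ℝ :=
  ∏ j, (t.1 j) ^ ((α j : ℝ))

/-- The fractional monomial `t ↦ t^α`, regarded as a complex-valued function. -/
noncomputable def fracMono {n : ℕ} (α : Fin n → ℚ) (t : NNVec n) : ℂ :=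
  ((fracMonoR α t : ℝ) : ℂ)

/-- The set of fractional monomials with nonnegative rational exponents. -/
def fracMonoSet (n : ℕ) : Set (NNVec n → ℂ) :=
  {f | ∃ α : Fin n → ℚ, (∀ j, 0 ≤ α j) ∧ f = fracMono α}

/-- `Qₙ`: the complex algebra of "fractional polynomials" on `[0,∞)ⁿ`, i.e. the algebra
generated by the fractional monomials `t^α`, `α ∈ (ℚ₊)ⁿ`. -/
noncomputable def QAlg (n : ℕ) : Subalgebra ℂ (NNVec n → ℂ) :=
  Algebra.adjoin ℂ (fracMonoSet n)

/-- A real-valued function on `[0,∞)ⁿ` is a *real fractional polynomial* if, viewed as a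
complex-valued function, it belongs to `Qₙ`. -/
def IsRealFracPoly {n : ℕ} (p : NNVec n → ℝ) : Prop :=
  (fun t => ((p t : ℝ) : ℂ)) ∈ QAlg n

/-- `θ_p(t) = (1 + t₁² + ⋯ + tₙ² + p₁(t)² + ⋯ + p_m(t)²)⁻¹`. -/
noncomputable def thetaFn {n m : ℕ} (p : Fin m → (NNVec n → ℝ)) (t : NNVec n) : ℝ :=
  (1 + ∑ j, (t.1 j) ^ 2 + ∑ k, (p k t) ^ 2)⁻¹

/-- `R`: the complex algebra generated by `Qₙ` together with the function `θ_p`. -/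
noncomputable def RAlg (n m : ℕ) (p : Fin m → (NNVec n → ℝ)) : Subalgebra ℂ (NNVec n → ℂ) :=
  Algebra.adjoin ℂ (fracMonoSet n ∪ {fun t => ((thetaFn p t : ℝ) : ℂ)})

/-!
Because of `θ`, the functions `t ↦ tⱼ θ(t)` and `θ` are bounded and continuous on `[0,∞)ⁿ`; they
separate points (θ(t) together with all tⱼ θ(t) recovers t), and each product of them is some
`t^α θ^β`, so by hypothesis it has the same integral against `μ₁` and `μ₂`. Both measures are
finite (the moment `α = 0`), and on a Polish space an algebra of bounded continuous functions that
separates points determines a finite Borel measure; hence `μ₁ = μ₂`.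
-/

open scoped BoundedContinuousFunction

namespace MeasureTheory

variable {E : Type*} [TopologicalSpace E] [PolishSpace E] [MeasurableSpace E] [BorelSpace E]

theorem ext_of_forall_mem_closure_integral_eq_of_polish {P P' : Measure E}
    [IsFiniteMeasure P] [IsFiniteMeasure P'] {S : Set (E →ᵇ ℝ)}
    (hS : ∀ x y, x ≠ y → ∃ g ∈ S, g x ≠ g y)
    (heq : ∀ g ∈ Submonoid.closure S, ∫ x, g x ∂P = ∫ x, g x ∂P') : P = P' := by
  have hstar : star S = S := by
    ext g
    have : star g = g := by ext x; simp
    rw [Set.mem_star, this]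
  let M : Submodule ℝ (E →ᵇ ℝ) :=
    { carrier := {g | ∫ x, g x ∂P = ∫ x, g x ∂P'}
      add_mem' := fun {f g} hf hg => by
        simp only [Set.mem_ofPred_eq, BoundedContinuousFunction.coe_add, Pi.add_apply] at *
        rw [integral_add (f.integrable P) (g.integrable P),
          integral_add (f.integrable P') (g.integrable P'), hf, hg]
      zero_mem' := by simp
      smul_mem' := fun c g hg => by
        simp only [Set.mem_ofPred_eq, BoundedContinuousFunction.coe_smul,
          smul_eq_mul] at *
        rw [integral_const_mul, integral_const_mul, hg] }
  refine ext_of_forall_mem_subalgebra_integral_eq_of_polish (A := StarAlgebra.adjoin ℝ S)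
    (fun x y hxy => ?_) fun g hg => ?_
  · obtain ⟨g, hgS, hg⟩ := hS x y hxy
    exact ⟨_, ⟨_, ⟨g, StarAlgebra.subset_adjoin ℝ S hgS, rfl⟩, rfl⟩, hg⟩
  · have hspan : Submodule.span ℝ (Submonoid.closure S : Set (E →ᵇ ℝ)) ≤ M :=
      Submodule.span_le.mpr heq
    rw [← Algebra.adjoin_eq_span] at hspan
    rw [← SetLike.mem_coe, ← StarSubalgebra.coe_toSubalgebra, StarAlgebra.adjoin_toSubalgebra,
      hstar, Set.union_self] at hg
    exact hspan hg

end MeasureTheory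

instance (n : ℕ) : PolishSpace (NNVec n) :=
  (isClosed_Ici (a := (0 : Fin n → ℝ))).polishSpace

section FractionalMonomials

variable {n : ℕ}

theorem continuous_fracMonoR {α : Fin n → ℚ} (hα : ∀ j, 0 ≤ α j) :
    Continuous (fracMonoR α) :=
  continuous_finsetProd _ fun j _ =>
    ((continuous_apply j).comp continuous_subtype_val).rpow_const fun _ =>
      Or.inr (Rat.cast_nonneg.mpr (hα j))

theorem continuous_of_mem_QAlg {f : NNVec n → ℂ} (hf : f ∈ QAlg n) : Continuous f := by
  induction hf using Algebra.adjoin_induction with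
  | mem g hg =>
    obtain ⟨α, hα, rfl⟩ := hg
    exact Complex.continuous_ofReal.comp (continuous_fracMonoR hα)
  | algebraMap r => exact continuous_const
  | add f g _ _ hf hg => exact hf.add hg
  | mul f g _ _ hf hg => exact hf.mul hg

theorem IsRealFracPoly.continuous {q : NNVec n → ℝ} (hq : IsRealFracPoly q) : Continuous q :=
  Complex.continuous_re.comp (continuous_of_mem_QAlg hq)

@[simp]
theorem fracMonoR_zero (t : NNVec n) : fracMonoR 0 t = 1 := by
  simp [fracMonoR]

theorem fracMonoR_add {α α' : Fin n → ℚ} (hα : ∀ j, 0 ≤ α j) (hα' : ∀ j, 0 ≤ α' j)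
    (t : NNVec n) : fracMonoR (α + α') t = fracMonoR α t * fracMonoR α' t := by
  simp only [fracMonoR, ← Finset.prod_mul_distrib, Pi.add_apply, Rat.cast_add]
  exact Finset.prod_congr rfl fun j _ =>
    Real.rpow_add_of_nonneg (t.2 j) (Rat.cast_nonneg.mpr (hα j)) (Rat.cast_nonneg.mpr (hα' j))

@[simp]
theorem fracMonoR_single (j : Fin n) (t : NNVec n) : fracMonoR (Pi.single j 1) t = t.1 j := by
  rw [fracMonoR, Finset.prod_eq_single j (fun i _ hij => by simp [hij]) (by simp)]
  simp

end FractionalMonomials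

section Theta

variable {n m : ℕ} (p : Fin m → (NNVec n → ℝ))

theorem one_add_sum_sq_le_inv_thetaFn (t : NNVec n) :
    1 + ∑ j, t.1 j ^ 2 ≤ (thetaFn p t)⁻¹ := by
  rw [thetaFn, inv_inv]
  exact le_add_of_nonneg_right (Finset.sum_nonneg fun k _ => sq_nonneg _)

theorem thetaFn_pos (t : NNVec n) : 0 < thetaFn p t :=
  inv_pos.mp <| lt_of_lt_of_le (by positivity) (one_add_sum_sq_le_inv_thetaFn p t)

theorem thetaFn_le_one (t : NNVec n) : thetaFn p t ≤ 1 :=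
  (one_le_inv₀ (thetaFn_pos p t)).mp <|
    (le_add_of_nonneg_right (Finset.sum_nonneg fun _ _ => sq_nonneg _)).trans
      (one_add_sum_sq_le_inv_thetaFn p t)

theorem coord_mul_thetaFn_le_one (t : NNVec n) (j : Fin n) : t.1 j * thetaFn p t ≤ 1 := by
  have hθ := thetaFn_pos p t
  have hcoord : t.1 j ≤ (thetaFn p t)⁻¹ :=
    calc t.1 j ≤ 1 + t.1 j ^ 2 := by nlinarith [sq_nonneg (t.1 j - 1)]
      _ ≤ 1 + ∑ i, t.1 i ^ 2 := by
        gcongr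
        exact Finset.single_le_sum (fun i _ => sq_nonneg (t.1 i)) (Finset.mem_univ j)
      _ ≤ (thetaFn p t)⁻¹ := one_add_sum_sq_le_inv_thetaFn p t
  calc t.1 j * thetaFn p t ≤ (thetaFn p t)⁻¹ * thetaFn p t := by gcongr
    _ = 1 := inv_mul_cancel₀ hθ.ne'

theorem continuous_thetaFn (hp : ∀ k, Continuous (p k)) : Continuous (thetaFn p) := by
  refine Continuous.inv₀ ?_ fun t => ?_
  · exact (continuous_const.add (continuous_finsetSum _ fun j _ =>
      ((continuous_apply j).comp continuous_subtype_val).pow 2)).add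
        (continuous_finsetSum _ fun k _ => (hp k).pow 2)
  · simpa [thetaFn] using (inv_pos.mpr (thetaFn_pos p t)).ne'

end Theta

section ThetaGenerators

variable {n m : ℕ} (p : Fin m → (NNVec n → ℝ)) (hp : ∀ k, Continuous (p k))

noncomputable def thetaBCF : NNVec n →ᵇ ℝ :=
  .ofNormedAddCommGroup (thetaFn p) (continuous_thetaFn p hp) 1 fun t => by
    rw [Real.norm_of_nonneg (thetaFn_pos p t).le]
    exact thetaFn_le_one p t

noncomputable def coordMulThetaBCF (j : Fin n) : NNVec n →ᵇ ℝ :=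
  .ofNormedAddCommGroup (fun t => t.1 j * thetaFn p t)
    (((continuous_apply j).comp continuous_subtype_val).mul (continuous_thetaFn p hp)) 1
    fun t => by
      rw [Real.norm_of_nonneg (mul_nonneg (t.2 j) (thetaFn_pos p t).le)]
      exact coord_mul_thetaFn_le_one p t j

@[simp]
theorem thetaBCF_apply (t : NNVec n) : thetaBCF p hp t = thetaFn p t := rfl

@[simp]
theorem coordMulThetaBCF_apply (j : Fin n) (t : NNVec n) :
    coordMulThetaBCF p hp j t = t.1 j * thetaFn p t := rfl

def thetaGenerators : Set (NNVec n →ᵇ ℝ) :=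
  Set.range (coordMulThetaBCF p hp) ∪ {thetaBCF p hp}

theorem thetaGenerators_separatesPoints (x y : NNVec n) (hxy : x ≠ y) :
    ∃ g ∈ thetaGenerators p hp, g x ≠ g y := by
  by_cases hθ : thetaFn p x = thetaFn p y
  · obtain ⟨j, hj⟩ : ∃ j, x.1 j ≠ y.1 j := Function.ne_iff.mp (Subtype.coe_ne_coe.mpr hxy)
    refine ⟨coordMulThetaBCF p hp j, Or.inl ⟨j, rfl⟩, ?_⟩
    simpa [hθ] using ⟨hj, (thetaFn_pos p y).ne'⟩
  · exact ⟨thetaBCF p hp, Or.inr rfl, by simpa using hθ⟩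

theorem exists_eq_fracMonoR_mul_thetaFn_pow {g : NNVec n →ᵇ ℝ}
    (hg : g ∈ Submonoid.closure (thetaGenerators p hp)) :
    ∃ (α : Fin n → ℚ) (β : ℕ), (∀ j, 0 ≤ α j) ∧ ⇑g = fun t => fracMonoR α t * thetaFn p t ^ β := by
  induction hg using Submonoid.closure_induction with
  | mem g hg =>
    rcases hg with ⟨j, rfl⟩ | rfl
    · exact ⟨Pi.single j 1, 1, Pi.single_nonneg.mpr zero_le_one, by ext t; simp⟩
    · exact ⟨0, 1, fun _ => le_rfl, by ext t; simp⟩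
  | one => exact ⟨0, 0, fun _ => le_rfl, by ext t; simp⟩
  | mul f g _ _ hf hg =>
    obtain ⟨α, β, hα, hf⟩ := hf
    obtain ⟨α', β', hα', hg⟩ := hg
    refine ⟨α + α', β + β', fun j => add_nonneg (hα j) (hα' j), ?_⟩
    ext t
    simp only [BoundedContinuousFunction.coe_mul, Pi.mul_apply, hf, hg, fracMonoR_add hα hα',
      pow_add]
    ring

end ThetaGenerators

theorem isFiniteMeasure_of_integrable_moments {n : ℕ} {μ : Measure (NNVec n)}
    (hmom : ∀ α : NNVec n, Integrable (fun t : NNVec n => ∏ j, (t.1 j) ^ (α.1 j)) μ) :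
    IsFiniteMeasure μ :=
  (integrable_const_iff_isFiniteMeasure one_ne_zero).mp <| by
    simpa using hmom ⟨0, fun _ => le_rfl⟩

theorem measure_unique_of_delta_families_coincide_general (n m : ℕ)
    (p : Fin m → (NNVec n → ℝ)) (hp : ∀ k, IsRealFracPoly (p k))
    (μ₁ μ₂ : Measure (NNVec n))
    (hmom₁ : ∀ α : NNVec n, Integrable (fun t : NNVec n => ∏ j, (t.1 j) ^ (α.1 j)) μ₁)
    (hmom₂ : ∀ α : NNVec n, Integrable (fun t : NNVec n => ∏ j, (t.1 j) ^ (α.1 j)) μ₂)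
    (hδ : ∀ α : Fin n → ℚ, (∀ j, 0 ≤ α j) → ∀ β : ℕ,
      (∫ t, fracMonoR α t * (thetaFn p t) ^ β ∂μ₁) =
        ∫ t, fracMonoR α t * (thetaFn p t) ^ β ∂μ₂) :
    μ₁ = μ₂ := by
  have := isFiniteMeasure_of_integrable_moments hmom₁
  have := isFiniteMeasure_of_integrable_moments hmom₂
  have hpc : ∀ k, Continuous (p k) := fun k => (hp k).continuous
  refine ext_of_forall_mem_closure_integral_eq_of_polish
    (thetaGenerators_separatesPoints p hpc) fun g hg => ?_
  obtain ⟨α, β, hα, hg⟩ := exists_eq_fracMonoR_mul_thetaFn_pow p hpc hg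
  rw [hg]
  exact hδ α hα β

/-- Let `γ = (γ_α)_{α∈[0,∞)ⁿ}` be a continuous family of nonnegative numbers
and let `μ₁, μ₂` be positive Borel measures on `[0,∞)ⁿ`, both carried by
`E = ⋂ₖ pₖ⁻¹([0,∞))` for real fractional polynomials `p₁, …, p_m`, with
`γ_α = ∫ t^α dμᵢ` for all `α ∈ [0,∞)ⁿ`, `i = 1, 2`.  If the induced extended families
coincide, i.e. `∫ t^α θ(t)^β dμ₁ = ∫ t^α θ(t)^β dμ₂` for all `α ∈ (ℚ₊)ⁿ`, `β ∈ ℤ₊`, where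
`θ(t) = (1 + Σⱼ tⱼ² + Σₖ pₖ(t)²)⁻¹`, then `μ₁ = μ₂`. -/
theorem measure_unique_of_delta_families_coincide (n m : ℕ)
    (p : Fin m → (NNVec n → ℝ)) (hp : ∀ k, IsRealFracPoly (p k))
    (γ : NNVec n → ℝ) (hγcont : Continuous γ) (hγpos : ∀ α, 0 ≤ γ α)
    (μ₁ μ₂ : Measure (NNVec n))
    (hsupp₁ : ∀ k, μ₁ {t : NNVec n | p k t < 0} = 0)
    (hsupp₂ : ∀ k, μ₂ {t : NNVec n | p k t < 0} = 0)
    (hmom₁ : ∀ α : NNVec n, Integrable (fun t : NNVec n => ∏ j, (t.1 j) ^ (α.1 j)) μ₁)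
    (hmom₂ : ∀ α : NNVec n, Integrable (fun t : NNVec n => ∏ j, (t.1 j) ^ (α.1 j)) μ₂)
    (hrep₁ : ∀ α : NNVec n, γ α = ∫ t, (∏ j, (t.1 j) ^ (α.1 j)) ∂μ₁)
    (hrep₂ : ∀ α : NNVec n, γ α = ∫ t, (∏ j, (t.1 j) ^ (α.1 j)) ∂μ₂)
    (hδ : ∀ α : Fin n → ℚ, (∀ j, 0 ≤ α j) → ∀ β : ℕ,
      (∫ t, fracMonoR α t * (thetaFn p t) ^ β ∂μ₁) =
        ∫ t, fracMonoR α t * (thetaFn p t) ^ β ∂μ₂) :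
    μ₁ = μ₂ :=
  measure_unique_of_delta_families_coincide_general n m p hp μ₁ μ₂ hmom₁ hmom₂ hδ
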